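/- arXiv:2302.09816 — 10 statements merged into one kernel-verified Lean document; each statement's English description precedes it below -/
import Mathlib

section
/- Let f : ℝⁿ → ℝ be continuously differentiable with gradient g. For points x_k, x_{k+1} with s_k = x_{k+1} - x_k, define μ_k = 2(f(x_k) - f(x_{k+1})) + (g(x_k) + g(x_{k+1}))ᵀ s_k. If g is L-Lipschitz on a convex set containing x_k and x_{k+1}, then |μ_k| ≤ L ‖s_k‖². -/
/-!
By the mean value theorem, `f y - f x = ⟪f' z, y - x⟫` for some `z` on the segment `[x, y]`, so
`2 (f x - f y) + ⟪f' x + f' y, y - x⟫ = ⟪f' x - f' z, y - x⟫ + ⟪f' y - f' z, y - x⟫`.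
By Cauchy–Schwarz and the Lipschitz bound the absolute value of the right-hand side is at most
`K (‖x - z‖ + ‖y - z‖) ‖y - x‖`, and `‖x - z‖ + ‖y - z‖ = ‖y - x‖` because `z` lies on the segment.
-/

open scoped RealInnerProductSpace NNReal

section

variable {E : Type*} [NormedAddCommGroup E] [InnerProductSpace ℝ E] [CompleteSpace E]
  {f : E → ℝ} {f' : E → E} {s : Set E} {x y : E}

theorem Convex.exists_mem_segment_sub_eq_inner_of_hasGradientWithinAt
    (hf : ∀ x ∈ s, HasGradientWithinAt f (f' x) s x) (hs : Convex ℝ s) (hx : x ∈ s)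
    (hy : y ∈ s) : ∃ z ∈ segment ℝ x y, f y - f x = ⟪f' z, y - x⟫ := by
  obtain ⟨z, hz, heq⟩ := domain_mvt
    (fun x hx => hasGradientWithinAt_iff_hasFDerivWithinAt.mp (hf x hx)) hs hx hy
  exact ⟨z, hz, by simpa using heq⟩

theorem Convex.abs_two_mul_sub_add_inner_le_of_lipschitzOnWith {K : ℝ≥0}
    (hf : ∀ x ∈ s, HasGradientWithinAt f (f' x) s x) (hs : Convex ℝ s)
    (hlip : LipschitzOnWith K f' s) (hx : x ∈ s) (hy : y ∈ s) :
    |2 * (f x - f y) + ⟪f' x + f' y, y - x⟫| ≤ K * ‖y - x‖ ^ 2 := by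
  obtain ⟨z, hz, hmvt⟩ := hs.exists_mem_segment_sub_eq_inner_of_hasGradientWithinAt hf hx hy
  have hzs : z ∈ s := hs.segment_subset hx hy hz
  have hsplit : 2 * (f x - f y) + ⟪f' x + f' y, y - x⟫
      = ⟪f' x - f' z, y - x⟫ + ⟪f' y - f' z, y - x⟫ := by
    rw [inner_sub_left, inner_sub_left, inner_add_left]
    linarith
  have hterm : ∀ w ∈ s, |⟪f' w - f' z, y - x⟫| ≤ K * ‖w - z‖ * ‖y - x‖ := fun w hw =>
    calc |⟪f' w - f' z, y - x⟫| ≤ ‖f' w - f' z‖ * ‖y - x‖ := abs_real_inner_le_norm _ _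
      _ ≤ K * ‖w - z‖ * ‖y - x‖ := by
        gcongr
        simpa only [dist_eq_norm] using hlip.dist_le_mul w hw z hzs
  have hdist : ‖x - z‖ + ‖y - z‖ = ‖y - x‖ := by
    have h := dist_add_dist_of_mem_segment hz
    rwa [dist_eq_norm, dist_eq_norm, dist_eq_norm, norm_sub_rev z y, norm_sub_rev x y] at h
  calc |2 * (f x - f y) + ⟪f' x + f' y, y - x⟫|
      ≤ |⟪f' x - f' z, y - x⟫| + |⟪f' y - f' z, y - x⟫| := hsplit ▸ abs_add_le _ _
    _ ≤ K * ‖x - z‖ * ‖y - x‖ + K * ‖y - z‖ * ‖y - x‖ :=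
        add_le_add (hterm x hx) (hterm y hy)
    _ = K * ‖y - x‖ ^ 2 := by rw [← hdist]; ring

end

/-- If `f` is continuously differentiable with gradient `L`-Lipschitz on a convex set
containing `xk` and `xk1`, then `|μ_k| ≤ L ‖s_k‖²` where `s_k = xk1 - xk` and
`μ_k = 2(f(xk) - f(xk1)) + (g(xk) + g(xk1))ᵀ s_k`. -/
theorem stmt_2 {n : ℕ} (f : EuclideanSpace ℝ (Fin n) → ℝ) (L : ℝ) (hL : 0 < L)
    (hf : ContDiff ℝ 1 f)
    (xk xk1 : EuclideanSpace ℝ (Fin n))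
    (s : Set (EuclideanSpace ℝ (Fin n))) (hconv : Convex ℝ s)
    (hxk : xk ∈ s) (hxk1 : xk1 ∈ s)
    (hlip : LipschitzOnWith (Real.toNNReal L) (gradient f) s) :
    abs (2 * (f xk - f xk1) + ⟪gradient f xk + gradient f xk1, xk1 - xk⟫) ≤
      L * ‖xk1 - xk‖ ^ 2 := by
  have hgrad : ∀ x ∈ s, HasGradientWithinAt f (gradient f x) s x := fun x _ =>
    hasGradientWithinAt_iff_hasFDerivWithinAt.mpr
      ((hf.differentiable one_ne_zero x).hasGradientAt.hasFDerivAt.hasFDerivWithinAt)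
  simpa only [Real.coe_toNNReal L hL.le] using
    hconv.abs_two_mul_sub_add_inner_le_of_lipschitzOnWith hgrad hlip hxk hxk1
end

section
/- Under the assumptions: g is L-Lipschitz, μ_k = 2(f_k - f_{k+1}) + (g_k + g_{k+1})ᵀ s_k, m ≥ 3 an integer, 0 < C < 1, and t_k = (m/(m-2)) μ_k/‖s_k‖² if μ_k > 0 and t_k = C μ_k/‖s_k‖² if μ_k ≤ 0, then −CL ≤ t_k ≤ mL/(m-2). -/
open scoped RealInnerProductSpace

section GradientLipschitz

variable {E : Type*} [NormedAddCommGroup E] [InnerProductSpace ℝ E] [CompleteSpace E]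
  {f : E → ℝ}

theorem exists_mem_segment_inner_gradient_eq (hf : Differentiable ℝ f) (x y : E) :
    ∃ z ∈ segment ℝ x y, f y - f x = ⟪gradient f z, y - x⟫ := by
  obtain ⟨z, hz, hmvt⟩ := domain_mvt (fun z _ ↦ (hf z).hasFDerivAt.hasFDerivWithinAt)
    convex_univ (Set.mem_univ x) (Set.mem_univ y)
  exact ⟨z, hz, hmvt.trans inner_gradient_left.symm⟩

/-- Comparing both endpoint gradients with the mean-value gradient at a point `z` of the
segment, the two Lipschitz errors add up to `K * (dist x z + dist z y) * ‖y - x‖`. -/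
theorem abs_two_mul_sub_add_inner_gradient_le {K : NNReal} (hf : Differentiable ℝ f)
    (hlip : LipschitzWith K (gradient f)) (x y : E) :
    |2 * (f x - f y) + ⟪gradient f x + gradient f y, y - x⟫| ≤ K * ‖y - x‖ ^ 2 := by
  obtain ⟨z, hz, hmvt⟩ := exists_mem_segment_inner_gradient_eq hf x y
  have hsplit : 2 * (f x - f y) + ⟪gradient f x + gradient f y, y - x⟫
      = ⟪gradient f x - gradient f z, y - x⟫ + ⟪gradient f y - gradient f z, y - x⟫ := by
    rw [inner_sub_left, inner_sub_left, inner_add_left]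
    linarith
  have hinner : ∀ a b : E, |⟪gradient f a - gradient f b, y - x⟫| ≤ K * dist a b * ‖y - x‖ :=
    fun a b ↦ (abs_real_inner_le_norm _ _).trans <| by
      rw [← dist_eq_norm]
      gcongr
      exact hlip.dist_le_mul a b
  calc |2 * (f x - f y) + ⟪gradient f x + gradient f y, y - x⟫|
      ≤ K * dist x z * ‖y - x‖ + K * dist y z * ‖y - x‖ := by
        rw [hsplit]
        exact (abs_add_le _ _).trans (add_le_add (hinner x z) (hinner y z))
    _ = K * ‖y - x‖ ^ 2 := by
        rw [dist_comm y z, ← dist_eq_norm y x, dist_comm y x, ← dist_add_dist_of_mem_segment hz]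
        ring

end GradientLipschitz

theorem stmt_3_general {n : ℕ} (f : EuclideanSpace ℝ (Fin n) → ℝ) (L C : ℝ) (m : ℕ)
    (hm : 3 ≤ m) (hC0 : 0 < C) (hL : 0 < L)
    (hf : ContDiff ℝ 1 f)
    (hlip : LipschitzWith (Real.toNNReal L) (gradient f))
    (xk xk1 : EuclideanSpace ℝ (Fin n))
    (μ t : ℝ)
    (hμ : μ = 2 * (f xk - f xk1) + ⟪gradient f xk + gradient f xk1, xk1 - xk⟫)
    (ht : t = if 0 < μ then ((m : ℝ) / ((m : ℝ) - 2)) * μ / ‖xk1 - xk‖ ^ 2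
              else C * μ / ‖xk1 - xk‖ ^ 2) :
    -C * L ≤ t ∧ t ≤ (m : ℝ) * L / ((m : ℝ) - 2) := by
  have hμL : |μ| ≤ L * ‖xk1 - xk‖ ^ 2 := by
    simpa only [hμ, Real.coe_toNNReal L hL.le] using
      abs_two_mul_sub_add_inner_gradient_le (hf.differentiable one_ne_zero) hlip xk xk1
  -- `xk1 = xk` is allowed: then `μ = 0`, and `q = 0` since `x / 0 = 0`.
  set q := μ / ‖xk1 - xk‖ ^ 2
  have hq : |q| ≤ L := by
    rw [abs_div, abs_sq]
    exact div_le_of_le_mul₀ (by positivity) hL.le hμL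
  obtain ⟨hq_lower, hq_upper⟩ := abs_le.mp hq
  have hm2 : (0 : ℝ) < m - 2 := by
    have : (3 : ℝ) ≤ m := by exact_mod_cast hm
    linarith
  have hfactor : 0 ≤ (m : ℝ) / (m - 2) := by positivity
  rw [ht, mul_div_assoc, mul_div_assoc, mul_div_right_comm]
  split_ifs with hμ_pos
  · have hq_nonneg : 0 ≤ q := by positivity
    exact ⟨by nlinarith, mul_le_mul_of_nonneg_left hq_upper hfactor⟩
  · have hq_nonpos : q ≤ 0 :=
      div_nonpos_of_nonpos_of_nonneg (not_lt.mp hμ_pos) (by positivity)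
    constructor <;> nlinarith

/-- If the gradient `g` of `f` is `L`-Lipschitz, `μ_k` is defined from function values and
gradients, `m ≥ 3` is an integer, `0 < C < 1`, and `t_k` is defined piecewise according to
the sign of `μ_k`, then `−CL ≤ t_k ≤ mL/(m-2)`. -/
theorem stmt_3 {n : ℕ} (f : EuclideanSpace ℝ (Fin n) → ℝ) (L C : ℝ) (m : ℕ)
    (hm : 3 ≤ m) (hC0 : 0 < C) (hC1 : C < 1) (hL : 0 < L)
    (hf : ContDiff ℝ 1 f)
    (hlip : LipschitzWith (Real.toNNReal L) (gradient f))
    (xk xk1 : EuclideanSpace ℝ (Fin n)) (hne : xk1 ≠ xk)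
    (μ t : ℝ)
    (hμ : μ = 2 * (f xk - f xk1) + ⟪gradient f xk + gradient f xk1, xk1 - xk⟫)
    (ht : t = if 0 < μ then ((m : ℝ) / ((m : ℝ) - 2)) * μ / ‖xk1 - xk‖ ^ 2
              else C * μ / ‖xk1 - xk‖ ^ 2) :
    -C * L ≤ t ∧ t ≤ (m : ℝ) * L / ((m : ℝ) - 2) :=
  stmt_3_general f L C m hm hC0 hL hf hlip xk xk1 μ t hμ ht
end

section
/- Suppose f : ℝⁿ → ℝ is differentiable, d_k is a descent direction at x_k (i.e., g_kᵀ d_k < 0), and α_k > 0 satisfies the first Wolfe condition f(x_k + α_k d_k) ≤ f(x_k) + ρ α_k g_kᵀ d_k with 0 < ρ < σ < 1. If μ_k ≤ 0 where μ_k = 2(f_k - f_{k+1}) + (g_k + g_{k+1})ᵀ s_k, s_k = α_k d_k, and in addition g(x_k + α_k d_k)ᵀ d_k = ρ g_kᵀ d_k, then g(x_k + α_k d_k)ᵀ s_k + C μ_k ≥ σ g_kᵀ s_k, where C = (σ-ρ)/(1-2ρ+σ). -/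
open scoped RealInnerProductSpace

/-- Key inequality for satisfiability of the modified curvature condition:
at a step where the Armijo condition holds, `μ_k ≤ 0`, and
`g(x_k + α_k d_k)ᵀ d_k = ρ g_kᵀ d_k`, we have
`g(x_k + α_k d_k)ᵀ s_k + C μ_k ≥ σ g_kᵀ s_k` with `C = (σ-ρ)/(1-2ρ+σ)`. -/
theorem stmt_4 {n : ℕ} (f : EuclideanSpace ℝ (Fin n) → ℝ)
    (hf : Differentiable ℝ f)
    (xk dk : EuclideanSpace ℝ (Fin n)) (α ρ σ : ℝ)
    (hρ : 0 < ρ) (hρσ : ρ < σ) (hσ : σ < 1) (hα : 0 < α)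
    (hdesc : ⟪gradient f xk, dk⟫ < 0)
    (harmijo : f (xk + α • dk) ≤ f xk + ρ * α * ⟪gradient f xk, dk⟫)
    (μ : ℝ)
    (hμ : μ = 2 * (f xk - f (xk + α • dk)) +
      ⟪gradient f xk + gradient f (xk + α • dk), α • dk⟫)
    (hμneg : μ ≤ 0)
    (hcurv : ⟪gradient f (xk + α • dk), dk⟫ = ρ * ⟪gradient f xk, dk⟫) :
    ⟪gradient f (xk + α • dk), α • dk⟫ + ((σ - ρ) / (1 - 2 * ρ + σ)) * μ ≥
      σ * ⟪gradient f xk, α • dk⟫ := by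
  have h1 : ⟪gradient f (xk + α • dk), α • dk⟫ = α * (ρ * ⟪gradient f xk, dk⟫) := by
    rw [real_inner_smul_right, hcurv]
  have h2 : ⟪gradient f xk + gradient f (xk + α • dk), α • dk⟫
      = α * ⟪gradient f xk, dk⟫ + α * (ρ * ⟪gradient f xk, dk⟫) := by
    rw [inner_add_left, real_inner_smul_right, real_inner_smul_right, hcurv]
  have h3 : ⟪gradient f xk, α • dk⟫ = α * ⟪gradient f xk, dk⟫ :=
    real_inner_smul_right _ _ _
  set t := ⟪gradient f xk, dk⟫ with ht
  have hden : 0 < 1 - 2 * ρ + σ := by linarith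
  have hC : (σ - ρ) / (1 - 2 * ρ + σ) * (1 - 2 * ρ + σ) = σ - ρ :=
    div_mul_cancel₀ _ (ne_of_gt hden)
  have hCpos : 0 ≤ (σ - ρ) / (1 - 2 * ρ + σ) :=
    div_nonneg (by linarith) (le_of_lt hden)
  have hμge : μ ≥ α * t * (1 - 2 * ρ + σ) := by
    rw [hμ, h2]
    nlinarith [mul_pos hα (neg_pos.mpr hdesc)]
  have key : (σ - ρ) / (1 - 2 * ρ + σ) * μ ≥ (σ - ρ) * (α * t) := by
    calc (σ - ρ) / (1 - 2 * ρ + σ) * μ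
        ≥ (σ - ρ) / (1 - 2 * ρ + σ) * (α * t * (1 - 2 * ρ + σ)) :=
          mul_le_mul_of_nonneg_left hμge hCpos
      _ = (σ - ρ) * (α * t) := by
          rw [mul_comm (α * t), ← mul_assoc, hC]
  rw [h1, h3]
  nlinarith [key]
end

section
/- Let f : ℝⁿ → ℝ be continuously differentiable and bounded below along the ray {x_k + α d_k : α > 0}, and suppose d_k is a descent direction (g_kᵀ d_k < 0). Then there exists a step size α_k > 0 satisfying the modified Wolfe conditions: f(x_k + α_k d_k) ≤ f(x_k) + ρ α_k g_kᵀ d_k and (g(x_k + α_k d_k) + min{t_k, 0} s_k)ᵀ d_k ≥ σ g_kᵀ d_k, where 0 < ρ < σ < 1, s_k = α_k d_k, and t_k = C μ_k/‖s_k‖² when μ_k ≤ 0, t_k ≥ 0 otherwise, with C = (σ-ρ)/(1-2ρ+σ) and μ_k = 2(f(x_k) - f(x_k + α_k d_k)) + (g(x_k) + g(x_k + α_k d_k))ᵀ s_k. -/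
open scoped RealInnerProductSpace
open Set Filter

/-! The step is an interior minimiser `ξ` of `φ α = f (x + α d) - f x - ρ α ⟪g, d⟫` on some `[0, b]`:
`φ' 0 = (1 - ρ) ⟪g, d⟫ < 0` makes `φ` negative just right of `0`, while the lower bound of `f`
along the ray makes `φ` positive far out. Then `φ ξ < 0` is the Armijo condition and `φ' ξ = 0`
says `⟪g (x + ξ d), d⟫ = ρ ⟪g, d⟫`. Together they give `μ ≥ ξ (1 - ρ) ⟪g, d⟫`, so when `μ ≤ 0` the
correction `t ⟪s, d⟫ = C μ / ξ` is at least `C (1 - ρ) ⟪g, d⟫ ≥ (σ - ρ) ⟪g, d⟫`. -/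

theorem exists_mem_Ioo_isLocalMin_le {α β : Type*} [ConditionallyCompleteLinearOrder α]
    [TopologicalSpace α] [OrderTopology α] [LinearOrder β] [TopologicalSpace β]
    [ClosedIicTopology β] {φ : α → β} {a b c : α} (hφ : ContinuousOn φ (Icc a b))
    (hc : c ∈ Icc a b) (ha : φ c < φ a) (hb : φ c < φ b) :
    ∃ ξ ∈ Ioo a b, IsLocalMin φ ξ ∧ φ ξ ≤ φ c := by
  obtain ⟨ξ, hξ, hmin⟩ := isCompact_Icc.exists_isMinOn_mem_subset (s := Ioo a b) hφ hc
    fun z ⟨hz, hzI⟩ ↦ by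
      rcases eq_endpoints_or_mem_Ioo_of_mem_Icc hz with rfl | rfl | hz' <;> tauto
  exact ⟨ξ, hξ, hmin.isLocalMin (Icc_mem_nhds hξ.1 hξ.2), hmin hc⟩

theorem HasDerivAt.exists_gt_lt_of_neg {φ : ℝ → ℝ} {c x : ℝ} (hφ : HasDerivAt φ c x)
    (hc : c < 0) : ∃ y, x < y ∧ φ y < φ x := by
  obtain ⟨y, hslope, hy⟩ :=
    (hφ.hasDerivWithinAt.liminf_right_slope_le hc).and_eventually self_mem_nhdsWithin |>.exists
  refine ⟨y, hy, ?_⟩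
  rw [slope_def_field, div_neg_iff] at hslope
  rcases hslope with ⟨-, hyx⟩ | ⟨hφyx, -⟩ <;> linarith

theorem hasDerivAt_comp_add_smul {E : Type*} [NormedAddCommGroup E] [InnerProductSpace ℝ E]
    [CompleteSpace E] {f : E → ℝ} (hf : Differentiable ℝ f) (x d : E) (α : ℝ) :
    HasDerivAt (fun α : ℝ => f (x + α • d)) ⟪gradient f (x + α • d), d⟫ α := by
  rw [inner_gradient_left]
  have hray : HasDerivAt (fun α : ℝ => x + α • d) d α := by
    simpa using ((hasDerivAt_id α).smul_const d).const_add x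
  exact (hf _).hasFDerivAt.comp_hasDerivAt α hray

theorem exists_pos_armijo_and_deriv_eq {h h' : ℝ → ℝ} {ρ : ℝ}
    (hd : ∀ α, HasDerivAt h (h' α) α) (hρ : 0 < ρ) (hρ1 : ρ < 1) (hdesc : h' 0 < 0)
    (hbdd : ∃ B, ∀ α, 0 < α → B ≤ h α) :
    ∃ ξ, 0 < ξ ∧ h ξ ≤ h 0 + ρ * ξ * h' 0 ∧ h' ξ = ρ * h' 0 := by
  obtain ⟨B, hB⟩ := hbdd
  set φ : ℝ → ℝ := fun α => h α - (h 0 + ρ * h' 0 * α)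
  have hφd (α : ℝ) : HasDerivAt φ (h' α - ρ * h' 0) α := by
    have hline := ((hasDerivAt_id α).const_mul (ρ * h' 0)).const_add (h 0)
    simp only [id, mul_one] at hline
    exact (hd α).sub hline
  obtain ⟨a, ha, hφa⟩ := (hφd 0).exists_gt_lt_of_neg (by nlinarith)
  have hgrow : Tendsto (fun α => B - h 0 + -(ρ * h' 0) * α) atTop atTop :=
    tendsto_atTop_add_const_left _ _ (tendsto_id.const_mul_atTop' (by nlinarith))
  obtain ⟨b, hb, hab⟩ := ((hgrow.eventually_gt_atTop 0).and (eventually_gt_atTop a)).exists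
  have hφ0 : φ 0 = 0 := by simp [φ]
  have hφb : 0 < φ b := by linarith [hB b (ha.trans hab)]
  obtain ⟨ξ, hξ, hmin, hle⟩ := exists_mem_Ioo_isLocalMin_le
    (fun α _ => (hφd α).continuousAt.continuousWithinAt) ⟨ha.le, hab.le⟩ hφa (by linarith)
  refine ⟨ξ, hξ.1, ?_, ?_⟩
  · linarith
  · linarith [hmin.hasDerivAt_eq_zero (hφd ξ)]

theorem modifiedWolfe_curvature_of_armijo {E : Type*} [NormedAddCommGroup E]
    [InnerProductSpace ℝ E] {g₀ g d : E} {f₀ f₁ ρ σ ξ t : ℝ} (hρσ : ρ < σ) (hσ : σ < 1)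
    (hdesc : ⟪g₀, d⟫ < 0) (hξ : 0 < ξ) (harmijo : f₁ ≤ f₀ + ρ * ξ * ⟪g₀, d⟫)
    (hslope : ⟪g, d⟫ = ρ * ⟪g₀, d⟫)
    (ht : (2 * (f₀ - f₁) + ⟪g₀ + g, ξ • d⟫ ≤ 0 →
        t = ((σ - ρ) / (1 - 2 * ρ + σ)) * (2 * (f₀ - f₁) + ⟪g₀ + g, ξ • d⟫) / ‖ξ • d‖ ^ 2) ∧
      (0 < 2 * (f₀ - f₁) + ⟪g₀ + g, ξ • d⟫ → 0 ≤ t)) :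
    ⟪g + min t 0 • (ξ • d), d⟫ ≥ σ * ⟪g₀, d⟫ := by
  set L := ⟪g₀, d⟫
  set μ := 2 * (f₀ - f₁) + ⟪g₀ + g, ξ • d⟫
  set C := (σ - ρ) / (1 - 2 * ρ + σ)
  have hd : 0 < ‖d‖ := norm_pos_iff.2 (by rintro rfl; simp [L] at hdesc)
  have hμ : ξ * (1 - ρ) * L ≤ μ := by
    simp only [μ, inner_add_left, real_inner_smul_right, hslope]
    nlinarith
  have hcurv : ⟪g + min t 0 • (ξ • d), d⟫ = ρ * L + min t 0 * ξ * ‖d‖ ^ 2 := by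
    rw [inner_add_left, hslope, smul_smul, real_inner_smul_left, real_inner_self_eq_norm_sq]
  rw [hcurv]
  rcases le_or_gt μ 0 with hμ₀ | hμ₀
  · have hC : 0 ≤ C := div_nonneg (by linarith) (by linarith)
    have hC₁ : C * (1 - ρ) ≤ σ - ρ := by
      rw [div_mul_eq_mul_div, div_le_iff₀ (by linarith)]
      nlinarith
    have htμ : min t 0 * ξ * ‖d‖ ^ 2 = C * μ / ξ := by
      have htC : t = C * μ / (ξ ^ 2 * ‖d‖ ^ 2) := by
        rw [ht.1 hμ₀, norm_smul, Real.norm_of_nonneg hξ.le, mul_pow]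
      rw [min_eq_left (htC ▸ div_nonpos_of_nonpos_of_nonneg (mul_nonpos_of_nonneg_of_nonpos hC hμ₀)
        (by positivity)), htC]
      field_simp
    rw [htμ, ge_iff_le, ← sub_le_iff_le_add', ← sub_mul, le_div_iff₀ hξ]
    nlinarith [mul_le_mul_of_nonneg_left hμ hC]
  · rw [min_eq_right (ht.2 hμ₀), zero_mul, zero_mul, add_zero]
    exact (mul_lt_mul_of_neg_right hρσ hdesc).le

/-- Existence of a step size for the modified Wolfe line search: if `f` is continuously
differentiable, bounded below along the ray `{x_k + α d_k : α > 0}`, and `d_k` is a descent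
direction, then there exists `α_k > 0` satisfying the modified Wolfe conditions. -/
theorem stmt_5 {n : ℕ} (f : EuclideanSpace ℝ (Fin n) → ℝ)
    (hf : ContDiff ℝ 1 f)
    (xk dk : EuclideanSpace ℝ (Fin n)) (ρ σ : ℝ)
    (hρ : 0 < ρ) (hρσ : ρ < σ) (hσ : σ < 1)
    (hbdd : ∃ B : ℝ, ∀ α : ℝ, 0 < α → B ≤ f (xk + α • dk))
    (hdesc : ⟪gradient f xk, dk⟫ < 0) :
    ∃ α : ℝ, 0 < α ∧
      f (xk + α • dk) ≤ f xk + ρ * α * ⟪gradient f xk, dk⟫ ∧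
      ∀ t : ℝ,
        ((2 * (f xk - f (xk + α • dk)) +
            ⟪gradient f xk + gradient f (xk + α • dk), α • dk⟫ ≤ 0 →
          t = ((σ - ρ) / (1 - 2 * ρ + σ)) *
            (2 * (f xk - f (xk + α • dk)) +
              ⟪gradient f xk + gradient f (xk + α • dk), α • dk⟫) / ‖α • dk‖ ^ 2) ∧
         (0 < 2 * (f xk - f (xk + α • dk)) +
            ⟪gradient f xk + gradient f (xk + α • dk), α • dk⟫ → 0 ≤ t)) →
        ⟪gradient f (xk + α • dk) + min t 0 • (α • dk), dk⟫ ≥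
          σ * ⟪gradient f xk, dk⟫ := by
  obtain ⟨ξ, hξ, harmijo, hslope⟩ :=
    exists_pos_armijo_and_deriv_eq (hasDerivAt_comp_add_smul (hf.differentiable one_ne_zero) xk dk)
      hρ (hρσ.trans hσ) (by simpa using hdesc) hbdd
  simp only [zero_smul, add_zero] at harmijo hslope
  exact ⟨ξ, hξ, harmijo, fun t ↦ modifiedWolfe_curvature_of_armijo hρσ hσ hdesc hξ harmijo hslope⟩
end

section
/- Suppose the gradient g of f is L-Lipschitz, d_k is a descent direction (g_kᵀ d_k < 0), and α_k satisfies the modified curvature condition (g_{k+1} + t_k s_k)ᵀ d_k ≥ σ g_kᵀ d_k where s_k = α_k d_k and t_k ≤ mL/(m-2) for some integer m ≥ 3. Then α_k ≥ [(σ-1)/(L(1 + m/(m-2)))] · (g_kᵀ d_k / ‖d_k‖²). -/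
open scoped RealInnerProductSpace

/-- Lower bound on the step size from the modified curvature condition: if `g` is
`L`-Lipschitz, `d_k` is a descent direction, `(g_{k+1} + t_k s_k)ᵀ d_k ≥ σ g_kᵀ d_k` with
`s_k = α_k d_k` and `t_k ≤ mL/(m-2)`, then
`α_k ≥ ((σ-1)/(L(1 + m/(m-2)))) (g_kᵀ d_k / ‖d_k‖²)`. -/
theorem stmt_6 {n : ℕ} (f : EuclideanSpace ℝ (Fin n) → ℝ)
    (hf : ContDiff ℝ 1 f) (L σ αk tk : ℝ) (m : ℕ) (hm : 3 ≤ m)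
    (hL : 0 < L) (hσ0 : 0 < σ) (hσ1 : σ < 1) (hα : 0 < αk)
    (hlip : LipschitzWith (Real.toNNReal L) (gradient f))
    (xk dk : EuclideanSpace ℝ (Fin n)) (hdk : dk ≠ 0)
    (hdesc : ⟪gradient f xk, dk⟫ < 0)
    (htk : tk ≤ (m : ℝ) * L / ((m : ℝ) - 2))
    (hcurv : ⟪gradient f (xk + αk • dk) + tk • (αk • dk), dk⟫ ≥
      σ * ⟪gradient f xk, dk⟫) :
    αk ≥ ((σ - 1) / (L * (1 + (m : ℝ) / ((m : ℝ) - 2)))) *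
      (⟪gradient f xk, dk⟫ / ‖dk‖ ^ 2) := by
  set gk := gradient f xk with hgk
  set g1 := gradient f (xk + αk • dk) with hg1
  have hnd : (0:ℝ) < ‖dk‖ := norm_pos_iff.mpr hdk
  have hm3 : (3:ℝ) ≤ (m:ℝ) := by exact_mod_cast hm
  have hm2 : (0:ℝ) < (m:ℝ) - 2 := by linarith
  have hmpos : (0:ℝ) < (m:ℝ) := by linarith
  have hCpos : 0 < L * (1 + (m:ℝ) / ((m:ℝ) - 2)) := by
    have := div_pos hmpos hm2
    exact mul_pos hL (by linarith)
  -- Lipschitz bound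
  have hdist : ‖g1 - gk‖ ≤ L * (αk * ‖dk‖) := by
    have h := hlip.dist_le_mul (xk + αk • dk) xk
    rw [Real.coe_toNNReal L hL.le] at h
    have h2 : dist (xk + αk • dk) xk = αk * ‖dk‖ := by
      rw [dist_eq_norm, add_sub_cancel_left, norm_smul, Real.norm_eq_abs,
        abs_of_pos hα]
    rw [dist_eq_norm, h2] at h
    exact h
  have key1 : ⟪g1 - gk, dk⟫ ≤ L * αk * ‖dk‖ ^ 2 := by
    calc ⟪g1 - gk, dk⟫ ≤ ‖g1 - gk‖ * ‖dk‖ := real_inner_le_norm _ _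
    _ ≤ (L * (αk * ‖dk‖)) * ‖dk‖ := mul_le_mul_of_nonneg_right hdist hnd.le
    _ = L * αk * ‖dk‖ ^ 2 := by ring
  simp only [inner_add_left, real_inner_smul_left, real_inner_self_eq_norm_sq] at hcurv
  rw [inner_sub_left] at key1
  have htk' : tk * (αk * ‖dk‖^2) ≤ (m:ℝ) * L / ((m:ℝ) - 2) * (αk * ‖dk‖^2) := by
    apply mul_le_mul_of_nonneg_right htk
    positivity
  rw [ge_iff_le, div_mul_div_comm, div_le_iff₀ (mul_pos hCpos (pow_pos hnd 2))]
  have hdiv : (m:ℝ) * L / ((m:ℝ) - 2) * ((m:ℝ) - 2) = (m:ℝ) * L := by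
    field_simp
  have hdiv2 : (m:ℝ) / ((m:ℝ) - 2) * ((m:ℝ) - 2) = (m:ℝ) := by
    field_simp
  have hre : (m:ℝ) * L / ((m:ℝ) - 2) * (αk * ‖dk‖^2)
      = L * ((m:ℝ) / ((m:ℝ) - 2)) * (αk * ‖dk‖^2) := by ring
  rw [hre] at htk'
  have hgoal : αk * (L * (1 + (m:ℝ) / ((m:ℝ) - 2)) * ‖dk‖ ^ 2)
      = L * αk * ‖dk‖^2 + L * ((m:ℝ) / ((m:ℝ) - 2)) * (αk * ‖dk‖^2) := by ring
  rw [hgoal]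
  nlinarith [key1, hcurv, htk']
end

section
/- (Zoutendijk condition for the modified Wolfe line search.) Suppose f is bounded below, continuously differentiable with L-Lipschitz gradient on a neighborhood of the level set {x : f(x) ≤ f(x_0)}, and consider iterations x_{k+1} = x_k + α_k d_k where each d_k is a descent direction and α_k satisfies the modified Wolfe conditions with 0 < ρ < σ < 1 and t_k ∈ [−CL, mL/(m-2)]. Then the series Σ_{k=0}^∞ (g_kᵀ d_k)² / ‖d_k‖² converges. -/
open scoped RealInnerProductSpace

/-- Zoutendijk condition for the modified Wolfe line search: if `f` is bounded below and
continuously differentiable with `L`-Lipschitz gradient on a neighborhood of the level set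
`{x : f x ≤ f x₀}`, and the iterates `x_{k+1} = x_k + α_k d_k` use descent directions and
step sizes satisfying the modified Wolfe conditions with `t_k ∈ [−CL, mL/(m-2)]`,
then `Σ (g_kᵀ d_k)²/‖d_k‖² < ∞`. -/
theorem stmt_7 {n : ℕ} (f : EuclideanSpace ℝ (Fin n) → ℝ)
    (hf : ContDiff ℝ 1 f)
    (L ρ σ : ℝ) (m : ℕ) (hm : 3 ≤ m) (hL : 0 < L)
    (hρ : 0 < ρ) (hρσ : ρ < σ) (hσ : σ < 1)
    (hbdd : ∃ B : ℝ, ∀ x, B ≤ f x)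
    (x d : ℕ → EuclideanSpace ℝ (Fin n)) (α t : ℕ → ℝ)
    (Ω : Set (EuclideanSpace ℝ (Fin n))) (hΩ : IsOpen Ω)
    (hlev : {y | f y ≤ f (x 0)} ⊆ Ω)
    (hlip : LipschitzOnWith (Real.toNNReal L) (gradient f) Ω)
    (hiter : ∀ k, x (k + 1) = x k + α k • d k)
    (hdk : ∀ k, d k ≠ 0)
    (hαk : ∀ k, 0 < α k)
    (hdesc : ∀ k, ⟪gradient f (x k), d k⟫ < 0)
    (htk : ∀ k, t k ∈ Set.Icc (-(((σ - ρ) / (1 - 2 * ρ + σ)) * L))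
      ((m : ℝ) * L / ((m : ℝ) - 2)))
    (harmijo : ∀ k, f (x (k + 1)) ≤ f (x k) + ρ * α k * ⟪gradient f (x k), d k⟫)
    (hcurv : ∀ k, ⟪gradient f (x (k + 1)) + min (t k) 0 • (α k • d k), d k⟫ ≥
      σ * ⟪gradient f (x k), d k⟫) :
    Summable (fun k : ℕ => ⟪gradient f (x k), d k⟫ ^ 2 / ‖d k‖ ^ 2) := by

  obtain ⟨B, hB⟩ := hbdd
  set c : ℝ := ρ * (1 - σ) / L with hc
  have hcpos : 0 < c := by
    apply div_pos (mul_pos hρ (by linarith)) hL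
  have hdec : ∀ k, f (x (k + 1)) ≤ f (x k) := by
    intro k
    have h1 := harmijo k
    have h2 := hdesc k
    have h3 := hαk k
    nlinarith [mul_neg_of_pos_of_neg (mul_pos hρ h3) h2]
  have hle0 : ∀ k, f (x k) ≤ f (x 0) := by
    intro k
    induction k with
    | zero => exact le_refl _
    | succ n ih => exact (hdec n).trans ih
  have hmem : ∀ k, x k ∈ Ω := fun k => hlev (hle0 k)
  have key : ∀ k, c * (⟪gradient f (x k), d k⟫ ^ 2 / ‖d k‖ ^ 2) ≤ f (x k) - f (x (k + 1)) := by
    intro k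
    have hd2 : (0 : ℝ) < ‖d k‖ ^ 2 := pow_pos (norm_pos_iff.mpr (hdk k)) 2
    have hgd : ⟪gradient f (x k), d k⟫ < 0 := hdesc k
    have hα := hαk k
    have hdist : ‖gradient f (x (k + 1)) - gradient f (x k)‖ ≤ L * (α k * ‖d k‖) := by
      have h := hlip.dist_le_mul (x (k + 1)) (hmem (k + 1)) (x k) (hmem k)
      rw [dist_eq_norm, dist_eq_norm] at h
      have hx : x (k + 1) - x k = α k • d k := by rw [hiter k]; abel
      rw [hx, norm_smul, Real.norm_eq_abs, abs_of_pos hα] at h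
      calc ‖gradient f (x (k + 1)) - gradient f (x k)‖
          ≤ (Real.toNNReal L : ℝ) * (α k * ‖d k‖) := h
        _ = L * (α k * ‖d k‖) := by rw [Real.coe_toNNReal L hL.le]
    have hCS : ⟪gradient f (x (k + 1)) - gradient f (x k), d k⟫ ≤ L * α k * ‖d k‖ ^ 2 := by
      calc ⟪gradient f (x (k + 1)) - gradient f (x k), d k⟫
          ≤ ‖gradient f (x (k + 1)) - gradient f (x k)‖ * ‖d k‖ := real_inner_le_norm _ _
        _ ≤ L * (α k * ‖d k‖) * ‖d k‖ :=
            mul_le_mul_of_nonneg_right hdist (norm_nonneg _)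
        _ = L * α k * ‖d k‖ ^ 2 := by ring
    have hcur : σ * ⟪gradient f (x k), d k⟫ ≤
        ⟪gradient f (x (k + 1)), d k⟫ + min (t k) 0 * (α k * ‖d k‖ ^ 2) := by
      have h := hcurv k
      rw [inner_add_left, inner_smul_left, inner_smul_left,
        real_inner_self_eq_norm_sq] at h
      simpa [mul_assoc] using h
    have hmin : min (t k) 0 ≤ 0 := min_le_right _ _
    have hstep : (σ - 1) * ⟪gradient f (x k), d k⟫ ≤ L * α k * ‖d k‖ ^ 2 := by
      have hsub : ⟪gradient f (x (k + 1)) - gradient f (x k), d k⟫ =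
          ⟪gradient f (x (k + 1)), d k⟫ - ⟪gradient f (x k), d k⟫ := inner_sub_left _ _ _
      nlinarith [mul_nonpos_of_nonpos_of_nonneg hmin (by positivity : (0:ℝ) ≤ α k * ‖d k‖ ^ 2)]
    have harm := harmijo k
    have hb : (0 : ℝ) < L * ‖d k‖ ^ 2 := mul_pos hL hd2
    have heq : c * (⟪gradient f (x k), d k⟫ ^ 2 / ‖d k‖ ^ 2) =
        ρ * (1 - σ) * ⟪gradient f (x k), d k⟫ ^ 2 / (L * ‖d k‖ ^ 2) := by
      rw [hc]; field_simp
    rw [heq, div_le_iff₀ hb]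
    have h1 := mul_le_mul_of_nonneg_left hstep
      (mul_nonneg hρ.le (neg_nonneg.mpr hgd.le))
    have h2 := mul_le_mul_of_nonneg_right
      (show ρ * α k * (-⟪gradient f (x k), d k⟫) ≤ f (x k) - f (x (k + 1)) by linarith)
      hb.le
    nlinarith [h1, h2]
  have hsum : Summable (fun k : ℕ => c * (⟪gradient f (x k), d k⟫ ^ 2 / ‖d k‖ ^ 2)) := by
    apply summable_of_sum_range_le (c := f (x 0) - B)
    · intro k
      have h1 : 0 ≤ ⟪gradient f (x k), d k⟫ ^ 2 / ‖d k‖ ^ 2 := by positivity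
      exact mul_nonneg hcpos.le h1
    · intro n
      calc ∑ i ∈ Finset.range n, c * (⟪gradient f (x i), d i⟫ ^ 2 / ‖d i‖ ^ 2)
          ≤ ∑ i ∈ Finset.range n, (f (x i) - f (x (i + 1))) :=
            Finset.sum_le_sum fun i _ => key i
        _ = f (x 0) - f (x n) := Finset.sum_range_sub' (fun i => f (x i)) n
        _ ≤ f (x 0) - B := by linarith [hB (x n)]
  have h := hsum.mul_left c⁻¹
  simpa [inv_mul_cancel_left₀ hcpos.ne'] using h
end

section
/- Let d_{k+1} = −θ_{k+1} g_{k+1} + β_{k+1} d_k in ℝⁿ. Suppose g_{k+1}ᵀ d_{k+1}^L ≤ −(θ_{k+1} − 1/4)‖g_{k+1}‖² holds for d_{k+1}^L = −θ_{k+1} g_{k+1} + β^L d_k (the direction with β_{k+1} = β^L), θ_{k+1} ≥ 1/4 + η for some η > 0, and β_{k+1} = max{β^L, β^R} where β^R ≤ 0 whenever β^L < 0. If β^L ≤ β^R < 0, then g_{k+1}ᵀ d_{k+1} ≤ −η ‖g_{k+1}‖². -/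
open scoped RealInnerProductSpace

/-- Truncation preserves sufficient descent: if the direction built with `β^L` satisfies
the sufficient descent inequality, `θ ≥ 1/4 + η`, and `β^L ≤ β^R < 0`, then the direction
built with `β = max{β^L, β^R}` satisfies `g_{k+1}ᵀ d_{k+1} ≤ −η ‖g_{k+1}‖²`. -/
theorem stmt_9 {n : ℕ} (g d : EuclideanSpace ℝ (Fin n)) (θ η βL βR : ℝ)
    (hη : 0 < η) (hθ : θ ≥ 1 / 4 + η)
    (hL : ⟪g, -θ • g + βL • d⟫ ≤ -(θ - 1 / 4) * ‖g‖ ^ 2)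
    (hβR : βR < 0) (hβLR : βL ≤ βR) :
    ⟪g, -θ • g + max βL βR • d⟫ ≤ -η * ‖g‖ ^ 2 := by
  rw [max_eq_right hβLR]
  simp only [inner_add_right, inner_smul_right, real_inner_self_eq_norm_sq] at hL ⊢
  have hβL : βL < 0 := lt_of_le_of_lt hβLR hβR
  have h1 : βL * ⟪g, d⟫ ≤ 1 / 4 * ‖g‖ ^ 2 := by nlinarith [sq_nonneg ‖g‖]
  have h2 : βR * ⟪g, d⟫ ≤ 1 / 4 * ‖g‖ ^ 2 := by
    rcases le_or_gt (⟪g, d⟫ : ℝ) 0 with h | h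
    · nlinarith [sq_nonneg ‖g‖]
    · nlinarith
  nlinarith [sq_nonneg ‖g‖]
end

section
/- Let u_k, u_{k-1} be unit vectors in ℝⁿ and δ_k ≥ 0 a real number, and set ω_k = u_k − δ_k u_{k-1}. Then ‖u_k − u_{k-1}‖ ≤ 2‖ω_k‖. -/
/-! Since `‖x‖ = ‖y‖`, the vectors `x - δ • y` and `δ • x - y` have the same length; their sum is
`(1 + δ) • (x - y)`, so the triangle inequality gives `(1 + δ) ‖x - y‖ ≤ 2 ‖x - δ • y‖`,
and `1 + δ ≥ 1`. -/

section RealInnerProductSpace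

variable {F : Type*} [NormedAddCommGroup F] [InnerProductSpace ℝ F]

theorem norm_smul_sub_eq_norm_sub_smul_of_norm_eq {x y : F} (hxy : ‖x‖ = ‖y‖) (a : ℝ) :
    ‖a • x - y‖ = ‖x - a • y‖ := by
  refine (sq_eq_sq₀ (norm_nonneg _) (norm_nonneg _)).mp ?_
  simp only [norm_sub_sq_real, norm_smul, real_inner_smul_left, real_inner_smul_right,
    Real.norm_eq_abs, mul_pow, sq_abs, hxy]
  ring

theorem one_add_mul_norm_sub_le_two_mul_norm_sub_smul {x y : F} (hxy : ‖x‖ = ‖y‖) {δ : ℝ}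
    (hδ : 0 ≤ δ) : (1 + δ) * ‖x - y‖ ≤ 2 * ‖x - δ • y‖ :=
  calc (1 + δ) * ‖x - y‖ = ‖(1 + δ) • (x - y)‖ := by
        rw [norm_smul, Real.norm_of_nonneg (by linarith)]
    _ = ‖(x - δ • y) + (δ • x - y)‖ := by congr 1; module
    _ ≤ ‖x - δ • y‖ + ‖δ • x - y‖ := norm_add_le _ _
    _ = 2 * ‖x - δ • y‖ := by rw [norm_smul_sub_eq_norm_sub_smul_of_norm_eq hxy]; ring

theorem norm_sub_le_two_mul_norm_sub_smul {x y : F} (hxy : ‖x‖ = ‖y‖) {δ : ℝ} (hδ : 0 ≤ δ) :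
    ‖x - y‖ ≤ 2 * ‖x - δ • y‖ :=
  calc ‖x - y‖ ≤ (1 + δ) * ‖x - y‖ := le_mul_of_one_le_left (norm_nonneg _) (by linarith)
    _ ≤ 2 * ‖x - δ • y‖ := one_add_mul_norm_sub_le_two_mul_norm_sub_smul hxy hδ

end RealInnerProductSpace

/-- For unit vectors `u_k, u_{k-1}` and `δ_k ≥ 0`, with `ω_k = u_k − δ_k u_{k-1}`,
one has `‖u_k − u_{k-1}‖ ≤ 2‖ω_k‖`. -/
theorem stmt_11 {n : ℕ} (uk uk1 : EuclideanSpace ℝ (Fin n)) (δ : ℝ)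
    (huk : ‖uk‖ = 1) (huk1 : ‖uk1‖ = 1) (hδ : 0 ≤ δ) :
    ‖uk - uk1‖ ≤ 2 * ‖uk - δ • uk1‖ :=
  norm_sub_le_two_mul_norm_sub_smul (huk.trans huk1.symm) hδ
end

section
/- Suppose μ_k ≤ 0, 0 < ρ < σ < 1, C = (σ-ρ)/(1-2ρ+σ), g_kᵀ s_k < 0, the Armijo condition f_k − f_{k+1} ≥ −ρ g_kᵀ s_k holds, and μ_k = 2(f_k − f_{k+1}) + (g_k + g_{k+1})ᵀ s_k with g_{k+1}ᵀ s_k ≥ σ g_kᵀ s_k − C μ_k. Then −g_kᵀ s_k + C μ_k ≥ −(1 − σ + ρ) g_kᵀ s_k > 0, i.e., −g_kᵀ d_k + t_k s_kᵀ d_k > 0 where t_k = Cμ_k/‖s_k‖², s_k = α_k d_k, α_k > 0; consequently g_{k+1}ᵀ d_k < d_kᵀ z_k where z_k = y_k + t_k s_k. -/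
/-!
Write `a = g_kᵀ s_k`. The Armijo condition and the modified curvature condition give
`(1 + C) μ ≥ (1 - 2ρ + σ) a`; multiplying by `C ≥ 0` and discarding `C² μ ≤ 0` yields
`C μ ≥ (σ - ρ) a`, which is (3.16). Dividing by `α_k` turns `-a + C μ > 0` into
`-g_kᵀ d_k + t_k s_kᵀ d_k > 0`, and the last claim is the same inequality after expanding `z_k`.
-/

open scoped RealInnerProductSpace

theorem mul_le_mul_of_modifiedWolfe {ρ σ C a b Δ μ : ℝ} (hρσ : ρ < σ) (hσ : σ < 1)
    (hC : C = (σ - ρ) / (1 - 2 * ρ + σ)) (harmijo : Δ ≥ -(ρ * a))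
    (hμ : μ = 2 * Δ + (a + b)) (hμneg : μ ≤ 0) (hcurv : b ≥ σ * a - C * μ) :
    (σ - ρ) * a ≤ C * μ := by
  have hden : 0 < 1 - 2 * ρ + σ := by linarith
  have hC_nonneg : 0 ≤ C := hC ▸ div_nonneg (by linarith) hden.le
  have hC_mul : C * (1 - 2 * ρ + σ) = σ - ρ := hC ▸ div_mul_cancel₀ _ hden.ne'
  have hsum : (1 - 2 * ρ + σ) * a ≤ (1 + C) * μ := by linarith
  calc (σ - ρ) * a = C * ((1 - 2 * ρ + σ) * a) := by rw [← hC_mul]; ring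
    _ ≤ C * ((1 + C) * μ) := mul_le_mul_of_nonneg_left hsum hC_nonneg
    _ = C * μ + C ^ 2 * μ := by ring
    _ ≤ C * μ := by nlinarith [sq_nonneg C]

section InnerProduct

variable {E : Type*} [NormedAddCommGroup E] [InnerProductSpace ℝ E]

theorem div_norm_smul_sq_mul_inner_smul_self {α : ℝ} (hα : α ≠ 0) {d : E} (hd : d ≠ 0)
    (c : ℝ) : c / ‖α • d‖ ^ 2 * ⟪α • d, d⟫ = c / α := by
  have hd' : ‖d‖ ≠ 0 := norm_ne_zero_iff.mpr hd
  rw [norm_smul, real_inner_smul_left, real_inner_self_eq_norm_sq, Real.norm_eq_abs, mul_pow,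
    sq_abs]
  field_simp

theorem inner_lt_inner_sub_add_smul_iff (g g' d s : E) (t : ℝ) :
    ⟪g', d⟫ < ⟪d, g' - g + t • s⟫ ↔ 0 < -⟪g, d⟫ + t * ⟪s, d⟫ := by
  rw [inner_add_right, inner_sub_right, real_inner_smul_right, real_inner_comm d g',
    real_inner_comm d g, real_inner_comm d s]
  constructor <;> intro h <;> linarith

end InnerProduct

theorem stmt_18_general {n : ℕ} (f : EuclideanSpace ℝ (Fin n) → ℝ)
    (xk dk : EuclideanSpace ℝ (Fin n)) (αk ρ σ C μ t : ℝ)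
    (zk : EuclideanSpace ℝ (Fin n))
    (hρ : 0 < ρ) (hρσ : ρ < σ) (hσ : σ < 1) (hα : 0 < αk)
    (hC : C = (σ - ρ) / (1 - 2 * ρ + σ))
    (hdesc : ⟪gradient f xk, αk • dk⟫ < 0)
    (harmijo : f xk - f (xk + αk • dk) ≥ -(ρ * ⟪gradient f xk, αk • dk⟫))
    (hμ : μ = 2 * (f xk - f (xk + αk • dk)) +
      ⟪gradient f xk + gradient f (xk + αk • dk), αk • dk⟫)
    (hμneg : μ ≤ 0)
    (ht : t = C * μ / ‖αk • dk‖ ^ 2)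
    (hz : zk = (gradient f (xk + αk • dk) - gradient f xk) + t • (αk • dk))
    (hcurv : ⟪gradient f (xk + αk • dk), αk • dk⟫ ≥
      σ * ⟪gradient f xk, αk • dk⟫ - C * μ) :
    (-⟪gradient f xk, αk • dk⟫ + C * μ ≥
        -((1 - σ + ρ) * ⟪gradient f xk, αk • dk⟫) ∧
      0 < -((1 - σ + ρ) * ⟪gradient f xk, αk • dk⟫)) ∧
    0 < -⟪gradient f xk, dk⟫ + t * ⟪αk • dk, dk⟫ ∧
    ⟪gradient f (xk + αk • dk), dk⟫ < ⟪dk, zk⟫ := by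
  set g := gradient f xk
  set g' := gradient f (xk + αk • dk)
  have hkey : (σ - ρ) * ⟪g, αk • dk⟫ ≤ C * μ :=
    mul_le_mul_of_modifiedWolfe hρσ hσ hC harmijo (by rwa [inner_add_left] at hμ) hμneg hcurv
  have hbound : -((1 - σ + ρ) * ⟪g, αk • dk⟫) ≤ -⟪g, αk • dk⟫ + C * μ := by linarith
  have hpos : 0 < -((1 - σ + ρ) * ⟪g, αk • dk⟫) :=
    neg_pos.mpr (mul_neg_of_pos_of_neg (by linarith) hdesc)
  have hd : dk ≠ 0 := by rintro rfl; simp at hdesc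
  have hdir : 0 < -⟪g, dk⟫ + t * ⟪αk • dk, dk⟫ := by
    rw [ht, div_norm_smul_sq_mul_inner_smul_self hα.ne' hd]
    have hscale : -⟪g, dk⟫ + C * μ / αk = (-⟪g, αk • dk⟫ + C * μ) / αk := by
      rw [real_inner_smul_right]
      field_simp
    rw [hscale]
    exact div_pos (by linarith) hα
  refine ⟨⟨hbound, hpos⟩, hdir, ?_⟩
  rw [hz]
  exact (inner_lt_inner_sub_add_smul_iff g g' dk _ t).mpr hdir

/-- Inequality (3.16): under the modified Wolfe conditions with `μ_k ≤ 0`,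
`−g_kᵀ s_k + C μ_k ≥ −(1−σ+ρ) g_kᵀ s_k > 0`, hence `−g_kᵀ d_k + t_k s_kᵀ d_k > 0`
and consequently `g_{k+1}ᵀ d_k < d_kᵀ z_k`. -/
theorem stmt_18 {n : ℕ} (f : EuclideanSpace ℝ (Fin n) → ℝ)
    (hf : Differentiable ℝ f)
    (xk dk : EuclideanSpace ℝ (Fin n)) (αk ρ σ C μ t : ℝ)
    (zk : EuclideanSpace ℝ (Fin n))
    (hρ : 0 < ρ) (hρσ : ρ < σ) (hσ : σ < 1) (hα : 0 < αk)
    (hC : C = (σ - ρ) / (1 - 2 * ρ + σ))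
    (hdesc : ⟪gradient f xk, αk • dk⟫ < 0)
    (harmijo : f xk - f (xk + αk • dk) ≥ -(ρ * ⟪gradient f xk, αk • dk⟫))
    (hμ : μ = 2 * (f xk - f (xk + αk • dk)) +
      ⟪gradient f xk + gradient f (xk + αk • dk), αk • dk⟫)
    (hμneg : μ ≤ 0)
    (ht : t = C * μ / ‖αk • dk‖ ^ 2)
    (hz : zk = (gradient f (xk + αk • dk) - gradient f xk) + t • (αk • dk))
    (hcurv : ⟪gradient f (xk + αk • dk), αk • dk⟫ ≥
      σ * ⟪gradient f xk, αk • dk⟫ - C * μ) :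
    (-⟪gradient f xk, αk • dk⟫ + C * μ ≥
        -((1 - σ + ρ) * ⟪gradient f xk, αk • dk⟫) ∧
      0 < -((1 - σ + ρ) * ⟪gradient f xk, αk • dk⟫)) ∧
    0 < -⟪gradient f xk, dk⟫ + t * ⟪αk • dk, dk⟫ ∧
    ⟪gradient f (xk + αk • dk), dk⟫ < ⟪dk, zk⟫ :=
  stmt_18_general f xk dk αk ρ σ C μ t zk hρ hρσ hσ hα hC hdesc harmijo hμ hμneg ht hz hcurv
end

section
/- If f : ℝⁿ → ℝ is three times continuously differentiable, then for the modified secant vector z_k^(3) = y_k + (3μ_k/‖s_k‖²) s_k with μ_k = 2(f_k − f_{k+1}) + (g_k + g_{k+1})ᵀ s_k, one has s_kᵀ ∇²f(x_{k+1}) s_k − s_kᵀ z_k^(3) = o(‖s_k‖³) as ‖s_k‖ → 0; i.e., 6(f_k − f_{k+1}) + 3(g_k + g_{k+1})ᵀ s_k + s_kᵀ y_k − s_kᵀ∇²f(x_{k+1})s_k = o(‖s_k‖³). -/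
/-!
Put `h = -s`. Expanding `f (x + h)` to third order and `∇f (x + h)` to second order about `x`,
every polynomial term of the defect cancels exactly (the cubic ones by the symmetry of `D³f x`),
so the defect equals `6 R₃(h) - 2 R₂(h) h` with `R₃` the third-order Taylor remainder of `f` and
`R₂` the second-order one of `Df`. Both are Peano remainders: `R₂` has derivative
`D²f (x + h) - D²f x - D³f x h = o(‖h‖)` and `R₃` has derivative `R₂ = o(‖h‖²)`, and the mean value
inequality turns a bound `o(‖h‖ᵏ)` on the derivative of a map vanishing at `0` into `o(‖h‖ᵏ⁺¹)`.
-/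

open Asymptotics Filter Topology
open scoped RealInnerProductSpace

section Taylor

variable {E F : Type*} [NormedAddCommGroup E] [NormedSpace ℝ E]
  [NormedAddCommGroup F] [NormedSpace ℝ F]

theorem isLittleO_pow_succ_of_hasFDerivAt {ψ : E → F} {ψ' : E → E →L[ℝ] F} {k : ℕ}
    (hψ : ∀ᶠ h in 𝓝 0, HasFDerivAt ψ (ψ' h) h) (hψ0 : ψ 0 = 0)
    (hψ' : ψ' =o[𝓝 0] fun h => ‖h‖ ^ k) :
    ψ =o[𝓝 0] fun h => ‖h‖ ^ (k + 1) := by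
  refine isLittleO_iff.2 fun c hc => ?_
  obtain ⟨δ, hδ, hball⟩ := Metric.eventually_nhds_iff_ball.1 (hψ.and (isLittleO_iff.1 hψ' hc))
  refine Metric.eventually_nhds_iff_ball.2 ⟨δ, hδ, fun s hs => ?_⟩
  have hsub : Metric.closedBall (0 : E) ‖s‖ ⊆ Metric.ball 0 δ :=
    Metric.closedBall_subset_ball (by simpa using hs)
  have hbound : ∀ y ∈ Metric.closedBall (0 : E) ‖s‖, ‖ψ' y‖ ≤ c * ‖s‖ ^ k := by
    intro y hy
    calc ‖ψ' y‖ ≤ c * ‖‖y‖ ^ k‖ := (hball y (hsub hy)).2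
      _ ≤ c * ‖s‖ ^ k := by
        rw [norm_pow, norm_norm]
        gcongr
        simpa using hy
  have hmv := (convex_closedBall (0 : E) ‖s‖).norm_image_sub_le_of_norm_hasFDerivWithin_le
    (x := 0) (y := s) (fun y hy => (hball y (hsub hy)).1.hasFDerivWithinAt) hbound
    (Metric.mem_closedBall_self (norm_nonneg s)) (by simp)
  rw [hψ0, sub_zero, sub_zero] at hmv
  calc ‖ψ s‖ ≤ c * ‖s‖ ^ k * ‖s‖ := hmv
    _ = c * ‖‖s‖ ^ (k + 1)‖ := by rw [norm_pow, norm_norm, pow_succ, mul_assoc]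

theorem isLittleO_apply_self_pow_succ {T : E → E →L[ℝ] F} {k : ℕ}
    (hT : T =o[𝓝 0] fun h => ‖h‖ ^ k) :
    (fun h => T h h) =o[𝓝 0] fun h => ‖h‖ ^ (k + 1) := by
  have hle : (fun h => T h h) =O[𝓝 0] fun h => ‖T h‖ * ‖h‖ :=
    isBigO_of_le _ fun h => ((T h).le_opNorm h).trans (le_abs_self _)
  simpa only [pow_succ] using hle.trans_isLittleO (hT.norm_left.mul_isBigO (isBigO_refl _ _))

noncomputable def taylorRemainder₂ (g : E → F) (x h : E) : F :=
  g (x + h) - g x - fderiv ℝ g x h - (2⁻¹ : ℝ) • fderiv ℝ (fderiv ℝ g) x h h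

noncomputable def taylorRemainder₃ (f : E → F) (x h : E) : F :=
  taylorRemainder₂ f x h - (6⁻¹ : ℝ) • fderiv ℝ (fderiv ℝ (fderiv ℝ f)) x h h h

variable {g : E → F} {x : E}

theorem hasFDerivAt_taylorRemainder₂ (hg : Differentiable ℝ g)
    (hg' : DifferentiableAt ℝ (fderiv ℝ g) x) (h : E) :
    HasFDerivAt (taylorRemainder₂ g x)
      (fderiv ℝ g (x + h) - fderiv ℝ g x - fderiv ℝ (fderiv ℝ g) x h) h := by
  set D2 := fderiv ℝ (fderiv ℝ g) x
  have hsymm : ∀ v w, D2 v w = D2 w v :=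
    second_derivative_symmetric (fun y => (hg y).hasFDerivAt) hg'.hasFDerivAt
  have hshift : HasFDerivAt (fun h => g (x + h)) (fderiv ℝ g (x + h)) h :=
    (hasFDerivAt_comp_add_left x).2 (hg (x + h)).hasFDerivAt
  refine (((hshift.sub_const (g x)).sub (fderiv ℝ g x).hasFDerivAt).sub
    ((D2.hasFDerivAt.clm_apply (hasFDerivAt_id h)).const_smul (2⁻¹ : ℝ))).congr_fderiv ?_
  ext k
  simp only [ContinuousLinearMap.comp_id, id_eq, smul_add, sub_apply, add_apply, smul_apply,
    ContinuousLinearMap.flip_apply, hsymm k h, sub_right_inj]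
  module

theorem taylorRemainder₂_isLittleO (hg : Differentiable ℝ g)
    (hg' : DifferentiableAt ℝ (fderiv ℝ g) x) :
    taylorRemainder₂ g x =o[𝓝 0] fun h => ‖h‖ ^ 2 := by
  refine isLittleO_pow_succ_of_hasFDerivAt
    (Eventually.of_forall (hasFDerivAt_taylorRemainder₂ hg hg')) (by simp [taylorRemainder₂]) ?_
  simpa using (hasFDerivAt_iff_isLittleO_nhds_zero.1 hg'.hasFDerivAt).norm_right

variable {f : E → F}

theorem fderiv_fderiv_fderiv_swap₁₂ (hf' : Differentiable ℝ (fderiv ℝ f))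
    (hf'' : DifferentiableAt ℝ (fderiv ℝ (fderiv ℝ f)) x) (u v w : E) :
    fderiv ℝ (fderiv ℝ (fderiv ℝ f)) x u v w = fderiv ℝ (fderiv ℝ (fderiv ℝ f)) x v u w := by
  rw [second_derivative_symmetric (fun y => (hf' y).hasFDerivAt) hf''.hasFDerivAt u v]

theorem fderiv_fderiv_fderiv_swap₂₃ (hf : Differentiable ℝ f)
    (hf' : Differentiable ℝ (fderiv ℝ f)) (hf'' : DifferentiableAt ℝ (fderiv ℝ (fderiv ℝ f)) x)
    (u v w : E) :
    fderiv ℝ (fderiv ℝ (fderiv ℝ f)) x u v w = fderiv ℝ (fderiv ℝ (fderiv ℝ f)) x u w v := by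
  -- inherited from the symmetry of `D²f y` at every point `y`
  have hsymm : (fun y => fderiv ℝ (fderiv ℝ f) y v w) = fun y => fderiv ℝ (fderiv ℝ f) y w v :=
    funext fun y =>
      second_derivative_symmetric (fun z => (hf z).hasFDerivAt) (hf' y).hasFDerivAt v w
  have h₁ := (hf''.hasFDerivAt.clm_apply (hasFDerivAt_const v x)).clm_apply (hasFDerivAt_const w x)
  have h₂ := (hf''.hasFDerivAt.clm_apply (hasFDerivAt_const w x)).clm_apply (hasFDerivAt_const v x)
  rw [hsymm] at h₁
  simpa using congrArg (· u) (h₁.unique h₂)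

theorem hasFDerivAt_taylorRemainder₃ (hf : Differentiable ℝ f)
    (hf' : Differentiable ℝ (fderiv ℝ f)) (hf'' : DifferentiableAt ℝ (fderiv ℝ (fderiv ℝ f)) x)
    (h : E) : HasFDerivAt (taylorRemainder₃ f x) (taylorRemainder₂ (fderiv ℝ f) x h) h := by
  have hcube : HasFDerivAt (fun h => fderiv ℝ (fderiv ℝ (fderiv ℝ f)) x h h h) _ h :=
    ((fderiv ℝ (fderiv ℝ (fderiv ℝ f)) x).hasFDerivAt.clm_apply (hasFDerivAt_id h)).clm_apply
      (hasFDerivAt_id h)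
  refine ((hasFDerivAt_taylorRemainder₂ hf (hf' x) h).sub
    (hcube.const_smul (6⁻¹ : ℝ))).congr_fderiv ?_
  ext k
  have h₁ := fderiv_fderiv_fderiv_swap₁₂ hf' hf'' k h h
  have h₂ := fderiv_fderiv_fderiv_swap₂₃ hf hf' hf'' h k h
  simp only [id_eq, ContinuousLinearMap.comp_id, ContinuousLinearMap.flip_add, add_apply, smul_add,
    sub_apply, smul_apply, ContinuousLinearMap.flip_apply, h₂, h₁, taylorRemainder₂, sub_right_inj]
  module

theorem taylorRemainder₃_isLittleO (hf : Differentiable ℝ f)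
    (hf' : Differentiable ℝ (fderiv ℝ f)) (hf'' : DifferentiableAt ℝ (fderiv ℝ (fderiv ℝ f)) x) :
    taylorRemainder₃ f x =o[𝓝 0] fun h => ‖h‖ ^ 3 :=
  isLittleO_pow_succ_of_hasFDerivAt
    (Eventually.of_forall (hasFDerivAt_taylorRemainder₃ hf hf' hf''))
    (by simp [taylorRemainder₃, taylorRemainder₂]) (taylorRemainder₂_isLittleO hf' hf'')

end Taylor

section Gradient

variable {H : Type*} [NormedAddCommGroup H] [InnerProductSpace ℝ H] [CompleteSpace H]

theorem inner_fderiv_gradient_left (f : H → ℝ) (x v w : H) :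
    ⟪fderiv ℝ (gradient f) x v, w⟫ = fderiv ℝ (fderiv ℝ f) x v w := by
  rw [← toDual_comp_gradient, LinearIsometryEquiv.comp_fderiv]
  rfl

theorem secant_defect_eq_taylorRemainder (f : H → ℝ) (x s : H) :
    6 * (f (x - s) - f x) + 3 * ⟪gradient f (x - s) + gradient f x, s⟫ +
        ⟪s, gradient f x - gradient f (x - s)⟫ - ⟪s, fderiv ℝ (gradient f) x s⟫ =
      6 * taylorRemainder₃ f x (-s) - 2 * taylorRemainder₂ (fderiv ℝ f) x (-s) (-s) := by
  rw [real_inner_comm (fderiv ℝ (gradient f) x s) s, inner_fderiv_gradient_left]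
  simp only [inner_add_left, inner_sub_right, inner_gradient_left, inner_gradient_right,
    conj_trivial, taylorRemainder₃, taylorRemainder₂, ← sub_eq_add_neg, map_neg, neg_neg,
    sub_apply, neg_apply, smul_apply, smul_eq_mul]
  ring

end Gradient

/-- Higher-order accuracy of the `m = 3` modified secant vector: if `f` is three times
continuously differentiable, then with `x_k = x_{k+1} - s`,
`6(f_k − f_{k+1}) + 3(g_k + g_{k+1})ᵀ s + sᵀ y_k − sᵀ ∇²f(x_{k+1}) s = o(‖s‖³)`
as `s → 0`. -/
theorem stmt_19 {n : ℕ} (f : EuclideanSpace ℝ (Fin n) → ℝ)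
    (hf : ContDiff ℝ 3 f) (x : EuclideanSpace ℝ (Fin n)) :
    (fun s : EuclideanSpace ℝ (Fin n) =>
        6 * (f (x - s) - f x) + 3 * ⟪gradient f (x - s) + gradient f x, s⟫ +
          ⟪s, gradient f x - gradient f (x - s)⟫ -
          ⟪s, fderiv ℝ (gradient f) x s⟫)
      =o[nhds 0] (fun s : EuclideanSpace ℝ (Fin n) => ‖s‖ ^ 3) := by
  have hDf : ContDiff ℝ 2 (fderiv ℝ f) := hf.fderiv_right (by norm_num)
  have hf₁ : Differentiable ℝ f := hf.differentiable (by norm_num)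
  have hf₂ : Differentiable ℝ (fderiv ℝ f) := hDf.differentiable (by norm_num)
  have hf₃ : DifferentiableAt ℝ (fderiv ℝ (fderiv ℝ f)) x :=
    (hDf.fderiv_right (m := 1) le_rfl).differentiable one_ne_zero x
  have hrem : (fun h => 6 * taylorRemainder₃ f x h - 2 * taylorRemainder₂ (fderiv ℝ f) x h h)
      =o[𝓝 0] fun h => ‖h‖ ^ 3 :=
    ((taylorRemainder₃_isLittleO hf₁ hf₂ hf₃).const_mul_left 6).sub
      ((isLittleO_apply_self_pow_succ (taylorRemainder₂_isLittleO hf₂ hf₃)).const_mul_left 2)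
  simp_rw [secant_defect_eq_taylorRemainder]
  simpa only [Function.comp_def, norm_neg] using
    hrem.comp_tendsto (continuous_neg.tendsto' 0 0 neg_zero)
end
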